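/- arXiv:2312.17081 — 2 statements merged into one kernel-verified Lean document; each statement's English description precedes it below -/
import Mathlib

section
/- Let T : ℝ^n → ℝ^n be a standard function (positive: T(x) > 0 componentwise; monotone: x ≤ y componentwise implies T(x) ≤ T(y) componentwise; scalable: for all δ > 1, δ·T(x) > T(δ·x) componentwise). Then T has at most one fixed point in ℝ^n. -/
theorem stmt_6 (n : ℕ) (T : (Fin n → ℝ) → (Fin n → ℝ))
    (hpos : ∀ x : Fin n → ℝ, ∀ i, 0 < T x i)
    (hmono : ∀ x y : Fin n → ℝ, (∀ i, x i ≤ y i) → ∀ i, T x i ≤ T y i)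
    (hscale : ∀ δ : ℝ, 1 < δ → ∀ x : Fin n → ℝ, ∀ i, T (δ • x) i < δ * T x i) :
    ∀ x y : Fin n → ℝ, T x = x → T y = y → x = y := by
  -- key lemma: there is no index with x i < y i for fixed points x, y
  have key : ∀ x y : Fin n → ℝ, T x = x → T y = y → ∀ i, ¬ x i < y i := by
    intro x y hx hy i hlt
    have hxpos : ∀ j, 0 < x j := fun j => hx ▸ hpos x j
    have hne : (Finset.univ : Finset (Fin n)).Nonempty := ⟨i, Finset.mem_univ i⟩
    set δ := Finset.sup' Finset.univ hne (fun j => y j / x j) with hδ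
    have hδge : ∀ j, y j / x j ≤ δ := fun j =>
      Finset.le_sup' (fun j => y j / x j) (Finset.mem_univ j)
    have hyle : ∀ j, y j ≤ δ * x j := by
      intro j
      have := (div_le_iff₀ (hxpos j)).mp (hδge j)
      linarith [this]
    have hδgt : 1 < δ := by
      have h1 : 1 < y i / x i := (one_lt_div (hxpos i)).mpr hlt
      exact lt_of_lt_of_le h1 (hδge i)
    obtain ⟨j, -, hj⟩ := Finset.exists_mem_eq_sup' hne (fun j => y j / x j)
    have hyj : y j = δ * x j := by
      rw [hδ, hj, div_mul_cancel₀ _ (hxpos j).ne']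
    have h1 : T y j ≤ T (δ • x) j := by
      apply hmono
      intro k
      simpa using hyle k
    have h2 : T (δ • x) j < δ * T x j := hscale δ hδgt x j
    have h3 : T y j = y j := by rw [hy]
    have h4 : T x j = x j := by rw [hx]
    rw [h3] at h1
    rw [h4] at h2
    linarith
  intro x y hx hy
  funext i
  by_contra hne
  rcases lt_or_gt_of_ne hne with h | h
  · exact key x y hx hy i h
  · exact key y x hy hx i h
end

section
/- Fix constants A > 0 (denoting α_i + ∑_k w_ik·b_kj), c ≥ 0, Q ≥ 0 (denoting ∑_{l≠j} 1/p_l), and β > 0. The function g(p) = (1/(2β)) · (A − p)·(p − c) / (1 + p·Q) for p in an interval where 1 + p·Q > 0 satisfies g''(p) < 0 whenever the numerator terms 2 + 2AQ + 2cQ + 2AcQ² are positive; in particular g is strictly concave on (0, ∞) when A > 0 and Q > 0. -/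
/-!
By the quotient rule, `h(s) = (A - s)(s - c) / (1 + sQ)` has
`h'(s) = (A + c + AcQ - 2s - Qs²) / (1 + sQ)²` and
`h''(s) = -2(1 + AQ)(1 + cQ) / (1 + sQ)³`,
the quadratic terms in `s` cancelling in the numerator. For `A, c ≥ 0`, `Q > 0` and `s > 0` every
factor is positive, so `g = h / (2β)` has negative second derivative on `(0, ∞)` and is strictly
concave there.
-/

open Filter Topology

section QuadraticDivAffine

variable (A c Q : ℝ)

theorem hasDerivAt_quadratic_div_affine {s : ℝ} (hs : 1 + s * Q ≠ 0) :
    HasDerivAt (fun t => (A - t) * (t - c) / (1 + t * Q))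
      ((A + c + A * c * Q - 2 * s - Q * s ^ 2) / (1 + s * Q) ^ 2) s := by
  have hnum : HasDerivAt (fun t => (A - t) * (t - c)) (A + c - 2 * s) s :=
    (((hasDerivAt_id' s).const_sub A).mul ((hasDerivAt_id' s).sub_const c)).congr_deriv (by ring)
  have hden : HasDerivAt (fun t => 1 + t * Q) Q s :=
    (((hasDerivAt_id' s).mul_const Q).const_add 1).congr_deriv (one_mul Q)
  refine (hnum.fun_div hden hs).congr_deriv ?_
  ring

theorem hasDerivAt_deriv_quadratic_div_affine {s : ℝ} (hs : 1 + s * Q ≠ 0) :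
    HasDerivAt (fun t => (A + c + A * c * Q - 2 * t - Q * t ^ 2) / (1 + t * Q) ^ 2)
      (-2 * (1 + A * Q) * (1 + c * Q) / (1 + s * Q) ^ 3) s := by
  have hnum : HasDerivAt (fun t => A + c + A * c * Q - 2 * t - Q * t ^ 2) (-2 - 2 * Q * s) s :=
    ((((hasDerivAt_id' s).const_mul 2).const_sub (A + c + A * c * Q)).sub
      ((hasDerivAt_pow 2 s).const_mul Q)).congr_deriv (by ring)
  have hden : HasDerivAt (fun t => (1 + t * Q) ^ 2) (2 * Q * (1 + s * Q)) s :=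
    ((((hasDerivAt_id' s).mul_const Q).const_add 1).pow 2).congr_deriv (by ring)
  refine (hnum.fun_div hden (pow_ne_zero 2 hs)).congr_deriv ?_
  field_simp
  ring

theorem deriv_deriv_quadratic_div_affine {p : ℝ} (hp : 1 + p * Q ≠ 0) :
    deriv (deriv fun t => (A - t) * (t - c) / (1 + t * Q)) p
      = -2 * (1 + A * Q) * (1 + c * Q) / (1 + p * Q) ^ 3 := by
  have hopen : IsOpen {t : ℝ | 1 + t * Q ≠ 0} := isOpen_ne_fun (by fun_prop) (by fun_prop)
  have hderiv : deriv (fun t => (A - t) * (t - c) / (1 + t * Q)) =ᶠ[𝓝 p]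
      fun t => (A + c + A * c * Q - 2 * t - Q * t ^ 2) / (1 + t * Q) ^ 2 :=
    eventually_of_mem (hopen.mem_nhds hp) fun t ht =>
      (hasDerivAt_quadratic_div_affine A c Q ht).deriv
  rw [hderiv.deriv_eq, (hasDerivAt_deriv_quadratic_div_affine A c Q hp).deriv]

end QuadraticDivAffine

theorem stmt_7 (A c Q β : ℝ) (hA : 0 < A) (hc : 0 ≤ c) (hQ : 0 < Q) (hβ : 0 < β) :
    (∀ p : ℝ, 0 < p →
      deriv (deriv (fun s : ℝ => (1 / (2 * β)) * ((A - s) * (s - c) / (1 + s * Q)))) p < 0) ∧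
    StrictConcaveOn ℝ (Set.Ioi (0 : ℝ))
      (fun s : ℝ => (1 / (2 * β)) * ((A - s) * (s - c) / (1 + s * Q))) := by
  have hsecond : ∀ p : ℝ, 0 < p →
      deriv (deriv (fun s : ℝ => (1 / (2 * β)) * ((A - s) * (s - c) / (1 + s * Q)))) p < 0 := by
    intro p hp
    have hAQ : 0 < 1 + A * Q := by positivity
    have hcQ : 0 < 1 + c * Q := by positivity
    have hpQ : 0 < 1 + p * Q := by positivity
    simp only [deriv_const_mul_field']
    rw [deriv_deriv_quadratic_div_affine A c Q hpQ.ne']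
    have hneg : -2 * (1 + A * Q) * (1 + c * Q) < 0 := by linarith [mul_pos hAQ hcQ]
    exact mul_neg_of_pos_of_neg (by positivity) (div_neg_of_neg_of_pos hneg (by positivity))
  refine ⟨hsecond, strictConcaveOn_of_deriv2_neg' (convex_Ioi 0) ?_ hsecond⟩
  refine continuousOn_const.mul (ContinuousOn.div (by fun_prop) (by fun_prop) fun s hs => ?_)
  have : 0 < s := hs
  positivity
end
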